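/- For every topological group G, the convolution map (m, n) ↦ m ∗ n is jointly continuous on norm-bounded subsets of M(G) when M(G) carries the UEB topology inherited from LUC(G)*. -/

import Mathlib

noncomputable section
set_option linter.unusedSectionVars false

open Filter Topology MeasureTheory BoundedContinuousFunction

section Defs

variable (G : Type*) [Group G] [TopologicalSpace G] [IsTopologicalGroup G]

/-- A bounded left uniformly continuous function on a topological group. -/
def IsLUCFun (f : G → ℂ) : Prop :=
  (∃ C, ∀ s, ‖f s‖ ≤ C) ∧
    ∀ ε > 0, ∃ U ∈ 𝓝 (1 : G), ∀ s t : G, s * t⁻¹ ∈ U → ‖f s - f t‖ < ε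

/-- A set of functions is equi-LUC if it is uniformly bounded in the sup norm and
equi-uniformly continuous for the right uniformity. -/
def EquiLUCFun (F : Set (G → ℂ)) : Prop :=
  (∃ C, ∀ f ∈ F, ∀ s, ‖f s‖ ≤ C) ∧
    ∀ ε > 0, ∃ U ∈ 𝓝 (1 : G), ∀ f ∈ F, ∀ s t : G, s * t⁻¹ ∈ U → ‖f s - f t‖ < ε

/-- A SIN group: there is a base of neighbourhoods of the identity that are
invariant under all inner automorphisms. -/
def IsSIN : Prop :=
  ∀ U ∈ 𝓝 (1 : G), ∃ V ∈ 𝓝 (1 : G), V ⊆ U ∧ ∀ x : G, ∀ v ∈ V, x * v * x⁻¹ ∈ V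

end Defs

section LUCSpace

variable (G : Type*) [Group G] [TopologicalSpace G] [IsTopologicalGroup G]

/-- The space `LUC(G)` of bounded left uniformly continuous complex functions on `G`,
as a subspace of the bounded continuous functions with the sup norm. -/
def LUC : Submodule ℂ (G →ᵇ ℂ) where
  carrier := {f | ∀ ε > 0, ∃ U ∈ 𝓝 (1 : G), ∀ s t : G, s * t⁻¹ ∈ U → ‖f s - f t‖ < ε}
  zero_mem' := fun ε hε => ⟨Set.univ, Filter.univ_mem, fun s t _ => by simpa using hε⟩
  add_mem' := by
    intro f g hf hg ε hε
    obtain ⟨U, hU, hUf⟩ := hf (ε / 2) (by linarith)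
    obtain ⟨V, hV, hVg⟩ := hg (ε / 2) (by linarith)
    refine ⟨U ∩ V, Filter.inter_mem hU hV, fun s t hst => ?_⟩
    have h1 := hUf s t hst.1
    have h2 := hVg s t hst.2
    have e : (f + g) s - (f + g) t = (f s - f t) + (g s - g t) := by
      simp only [BoundedContinuousFunction.coe_add, Pi.add_apply]; ring
    calc ‖(f + g) s - (f + g) t‖ ≤ ‖f s - f t‖ + ‖g s - g t‖ := by
          rw [e]; exact norm_add_le _ _
      _ < ε := by linarith
  smul_mem' := by
    intro c f hf ε hε
    obtain ⟨U, hU, hUf⟩ := hf (ε / (‖c‖ + 1)) (by positivity)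
    refine ⟨U, hU, fun s t hst => ?_⟩
    have h := hUf s t hst
    have e : (c • f) s - (c • f) t = c * (f s - f t) := by
      simp only [BoundedContinuousFunction.coe_smul, Pi.smul_apply, smul_eq_mul]; ring
    rw [e, norm_mul]
    calc ‖c‖ * ‖f s - f t‖ ≤ ‖c‖ * (ε / (‖c‖ + 1)) :=
          mul_le_mul_of_nonneg_left h.le (norm_nonneg c)
      _ < (‖c‖ + 1) * (ε / (‖c‖ + 1)) :=
          mul_lt_mul_of_pos_right (by linarith) (by positivity)
      _ = ε := by field_simp

/-- Equi-LUC subsets of the space `LUC(G)`. -/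
def EquiLUC (F : Set ↥(LUC G)) : Prop :=
  (∃ C, ∀ f ∈ F, ‖f‖ ≤ C) ∧
    ∀ ε > 0, ∃ U ∈ 𝓝 (1 : G), ∀ f ∈ F, ∀ s t : G,
      s * t⁻¹ ∈ U → ‖(f : G →ᵇ ℂ) s - (f : G →ᵇ ℂ) t‖ < ε

variable {G}

lemma lTrans_mem (s : G) {f : G →ᵇ ℂ} (hf : f ∈ LUC G) :
    f.compContinuous ⟨fun x => s * x, by continuity⟩ ∈ LUC G := by
  intro ε hε
  obtain ⟨U, hU, hUf⟩ := hf ε hε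
  refine ⟨(fun u => s * u * s⁻¹) ⁻¹' U, ?_, ?_⟩
  · have hc : ContinuousAt (fun u : G => s * u * s⁻¹) 1 := by fun_prop
    exact hc.preimage_mem_nhds (by simpa using hU)
  · intro x y hxy
    have h' : (s * x) * (s * y)⁻¹ ∈ U := by
      have h'' : s * (x * y⁻¹) * s⁻¹ ∈ U := hxy
      simpa [mul_inv_rev, mul_assoc] using h''
    exact hUf (s * x) (s * y) h'

/-- Left translation `ℓ_s f (x) = f (s x)` on `LUC(G)`. -/
def lTrans (s : G) (f : ↥(LUC G)) : ↥(LUC G) :=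
  ⟨(f : G →ᵇ ℂ).compContinuous ⟨fun x => s * x, by continuity⟩, lTrans_mem s f.2⟩

@[simp] lemma lTrans_apply (s : G) (f : ↥(LUC G)) (x : G) :
    ((lTrans s f : ↥(LUC G)) : G →ᵇ ℂ) x = (f : G →ᵇ ℂ) (s * x) := rfl

variable (G) in
/-- The dual Banach space `LUC(G)*`. -/
abbrev LUCDual := StrongDual ℂ ↥(LUC G)

lemma lTrans_norm_le (s : G) (f : ↥(LUC G)) : ‖lTrans s f‖ ≤ ‖f‖ :=
  BoundedContinuousFunction.norm_compContinuous_le _ _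

lemma lTrans_add (s : G) (f g : ↥(LUC G)) :
    lTrans s (f + g) = lTrans s f + lTrans s g := by
  apply Subtype.ext; ext x; rfl

lemma lTrans_smul (s : G) (c : ℂ) (f : ↥(LUC G)) :
    lTrans s (c • f) = c • lTrans s f := by
  apply Subtype.ext; ext x; rfl

lemma luccond_continuous {g : G → ℂ}
    (h : ∀ ε > 0, ∃ U ∈ 𝓝 (1 : G), ∀ s t : G, s * t⁻¹ ∈ U → ‖g s - g t‖ < ε) :
    Continuous g := by
  rw [continuous_iff_continuousAt]
  intro t
  rw [ContinuousAt, Metric.tendsto_nhds]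
  intro ε hε
  obtain ⟨U, hU, hUf⟩ := h ε hε
  have hmem : {s : G | s * t⁻¹ ∈ U} ∈ 𝓝 t := by
    have hc : ContinuousAt (fun s : G => s * t⁻¹) t := by fun_prop
    exact hc.preimage_mem_nhds (by simpa using hU)
  filter_upwards [hmem] with s hs
  rw [dist_eq_norm]
  exact hUf s t hs

lemma rAct_cond (n : LUCDual G) (f : ↥(LUC G)) :
    ∀ ε > 0, ∃ U ∈ 𝓝 (1 : G), ∀ s t : G, s * t⁻¹ ∈ U →
      ‖n (lTrans s f) - n (lTrans t f)‖ < ε := by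
  intro ε hε
  set δ := ε / (2 * (‖n‖ + 1)) with hδdef
  have hδ : 0 < δ := by positivity
  obtain ⟨U, hU, hUf⟩ := f.2 δ hδ
  refine ⟨U, hU, fun s t hst => ?_⟩
  have hdiff : ‖lTrans s f - lTrans t f‖ ≤ δ := by
    have : ‖((lTrans s f : ↥(LUC G)) : G →ᵇ ℂ) - ((lTrans t f : ↥(LUC G)) : G →ᵇ ℂ)‖ ≤ δ := by
      apply BoundedContinuousFunction.norm_le hδ.le |>.2
      intro x
      have hx : (s * x) * (t * x)⁻¹ ∈ U := by
        simpa [mul_inv_rev, mul_assoc] using hst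
      simpa using (hUf (s * x) (t * x) hx).le
    exact this
  calc ‖n (lTrans s f) - n (lTrans t f)‖ = ‖n (lTrans s f - lTrans t f)‖ := by
        rw [map_sub]
    _ ≤ ‖n‖ * ‖lTrans s f - lTrans t f‖ := n.le_opNorm _
    _ ≤ ‖n‖ * δ := mul_le_mul_of_nonneg_left hdiff (norm_nonneg n)
    _ < (‖n‖ + 1) * δ := mul_lt_mul_of_pos_right (by linarith) hδ
    _ = ε / 2 := by rw [hδdef]; field_simp
    _ < ε := by linarith

/-- The function `r_n f : s ↦ n (ℓ_s f)`, as an element of `LUC(G)`. -/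
def rAct (n : LUCDual G) (f : ↥(LUC G)) : ↥(LUC G) :=
  ⟨BoundedContinuousFunction.ofNormedAddCommGroup (fun s => n (lTrans s f))
      (luccond_continuous (rAct_cond n f))
      (‖n‖ * ‖f‖)
      (fun s => by
        calc ‖n (lTrans s f)‖ ≤ ‖n‖ * ‖lTrans s f‖ := n.le_opNorm _
          _ ≤ ‖n‖ * ‖f‖ := mul_le_mul_of_nonneg_left (lTrans_norm_le s f) (norm_nonneg n)),
   fun ε hε => by
      obtain ⟨U, hU, h⟩ := rAct_cond n f ε hε
      exact ⟨U, hU, fun s t hst => h s t hst⟩⟩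

@[simp] lemma rAct_apply (n : LUCDual G) (f : ↥(LUC G)) (s : G) :
    ((rAct n f : ↥(LUC G)) : G →ᵇ ℂ) s = n (lTrans s f) := rfl

lemma rAct_norm_le (n : LUCDual G) (f : ↥(LUC G)) : ‖rAct n f‖ ≤ ‖n‖ * ‖f‖ := by
  have h0 : (0 : ℝ) ≤ ‖n‖ * ‖f‖ := by positivity
  show ‖((rAct n f : ↥(LUC G)) : G →ᵇ ℂ)‖ ≤ ‖n‖ * ‖f‖
  refine (BoundedContinuousFunction.norm_le h0).2 fun s => ?_
  calc ‖n (lTrans s f)‖ ≤ ‖n‖ * ‖lTrans s f‖ := n.le_opNorm _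
    _ ≤ ‖n‖ * ‖f‖ := mul_le_mul_of_nonneg_left (lTrans_norm_le s f) (norm_nonneg n)

lemma rAct_add (n : LUCDual G) (f g : ↥(LUC G)) :
    rAct n (f + g) = rAct n f + rAct n g := by
  apply Subtype.ext
  ext s
  simp [rAct_apply, lTrans_add, map_add]

lemma rAct_smul (n : LUCDual G) (c : ℂ) (f : ↥(LUC G)) :
    rAct n (c • f) = c • rAct n f := by
  apply Subtype.ext
  ext s
  simp [rAct_apply, lTrans_smul, _root_.map_smul]

/-- Convolution on `LUC(G)*`: `(m ∗ n)(f) = m (r_n f)`. -/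
def conv (m n : LUCDual G) : LUCDual G :=
  LinearMap.mkContinuous
    { toFun := fun f => m (rAct n f)
      map_add' := by
        intro f g
        show m (rAct n (f + g)) = m (rAct n f) + m (rAct n g)
        rw [rAct_add, map_add]
      map_smul' := by
        intro c f
        show m (rAct n (c • f)) = c • m (rAct n f)
        rw [rAct_smul, _root_.map_smul] }
    (‖m‖ * ‖n‖)
    (fun f => by
      calc ‖m (rAct n f)‖ ≤ ‖m‖ * ‖rAct n f‖ := m.le_opNorm _
        _ ≤ ‖m‖ * (‖n‖ * ‖f‖) :=
            mul_le_mul_of_nonneg_left (rAct_norm_le n f) (norm_nonneg m)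
        _ = ‖m‖ * ‖n‖ * ‖f‖ := by ring)

@[simp] lemma conv_apply (m n : LUCDual G) (f : ↥(LUC G)) :
    conv m n f = m (rAct n f) := rfl

variable (G) in
/-- Convergence of a net in the UEB topology on `LUC(G)*`:
uniform convergence on every equi-LUC set. -/
def UEBTendsto {ι : Type*} (l : Filter ι) (m : ι → LUCDual G) (m₀ : LUCDual G) : Prop :=
  ∀ F : Set ↥(LUC G), EquiLUC G F → ∀ ε > 0, ∀ᶠ i in l, ∀ f ∈ F, ‖m i f - m₀ f‖ < ε

variable (G) in
/-- The UEB topology on `LUC(G)*`: the topology of uniform convergence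
on the equi-LUC subsets of `LUC(G)`. -/
def UEBTop : TopologicalSpace (LUCDual G) :=
  ⨅ F : {F : Set ↥(LUC G) // EquiLUC G F},
    TopologicalSpace.induced
      (fun m => UniformFun.ofFun (fun f : F.1 => m f.1) : LUCDual G → UniformFun F.1 ℂ)
      inferInstance

end LUCSpace

section MeasureStuff

variable {G : Type*} [Group G] [TopologicalSpace G] [IsTopologicalGroup G]
variable [MeasurableSpace G] [BorelSpace G]

lemma integrable_mul_luc (μ : Measure G) {f : G → ℂ} (hf : Integrable f μ)
    (h : ↥(LUC G)) : Integrable (fun x => f x * (h : G →ᵇ ℂ) x) μ := by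
  have hm : AEStronglyMeasurable (fun x => (h : G →ᵇ ℂ) x) μ :=
    ((h : G →ᵇ ℂ).continuous.aestronglyMeasurable)
  have := hf.bdd_mul hm (c := ‖(h : G →ᵇ ℂ)‖) (Filter.Eventually.of_forall fun x => (h : G →ᵇ ℂ).norm_coe_le_norm x)
  simpa [mul_comm] using this

/-- A function `f ∈ L¹(G,μ)` viewed as the element `h ↦ ∫ f·h dμ` of `LUC(G)*`. -/
def integFunctional (μ : Measure G) (f : G → ℂ) (hf : Integrable f μ) : LUCDual G :=
  LinearMap.mkContinuous
    { toFun := fun h : ↥(LUC G) => ∫ x, f x * (h : G →ᵇ ℂ) x ∂μ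
      map_add' := by
        intro h g
        have : (fun x => f x * ((h + g : ↥(LUC G)) : G →ᵇ ℂ) x)
            = fun x => f x * (h : G →ᵇ ℂ) x + f x * (g : G →ᵇ ℂ) x := by
          funext x
          simp [mul_add]
        show (∫ x, f x * ((h + g : ↥(LUC G)) : G →ᵇ ℂ) x ∂μ)
            = (∫ x, f x * (h : G →ᵇ ℂ) x ∂μ) + ∫ x, f x * (g : G →ᵇ ℂ) x ∂μ
        rw [this, integral_add (integrable_mul_luc μ hf h) (integrable_mul_luc μ hf g)]
      map_smul' := by
        intro c h
        have : (fun x => f x * ((c • h : ↥(LUC G)) : G →ᵇ ℂ) x)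
            = fun x => c • (f x * (h : G →ᵇ ℂ) x) := by
          funext x
          simp [smul_eq_mul]
          ring
        show (∫ x, f x * ((c • h : ↥(LUC G)) : G →ᵇ ℂ) x ∂μ)
            = c • ∫ x, f x * (h : G →ᵇ ℂ) x ∂μ
        rw [this, integral_smul] }
    (∫ x, ‖f x‖ ∂μ)
    (fun h => by
      calc ‖∫ x, f x * (h : G →ᵇ ℂ) x ∂μ‖ ≤ ∫ x, ‖f x * (h : G →ᵇ ℂ) x‖ ∂μ :=
            norm_integral_le_integral_norm _
        _ = ∫ x, ‖f x‖ * ‖(h : G →ᵇ ℂ) x‖ ∂μ := by simp [norm_mul]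
        _ ≤ ∫ x, ‖f x‖ * ‖h‖ ∂μ := by
            apply integral_mono ((integrable_mul_luc μ hf h).norm.congr ?_)
              (hf.norm.mul_const _)
            · intro x
              exact mul_le_mul_of_nonneg_left ((h : G →ᵇ ℂ).norm_coe_le_norm x)
                (norm_nonneg _)
            · filter_upwards with x
              simp [norm_mul]
        _ = (∫ x, ‖f x‖ ∂μ) * ‖h‖ := integral_mul_const _ _)

/-- An element of `LUC(G)*` given by a (complex) finite Radon measure, i.e. by a
linear combination of four finite inner-regular (w.r.t. compact sets) measures. -/
def IsRadonFunctional (m : LUCDual G) : Prop :=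
  ∃ μ : Fin 4 → Measure G, (∀ i, IsFiniteMeasure (μ i)) ∧ (∀ i, (μ i).InnerRegular) ∧
    ∀ f : ↥(LUC G), m f =
      ((∫ x, (f : G →ᵇ ℂ) x ∂(μ 0)) - ∫ x, (f : G →ᵇ ℂ) x ∂(μ 1))
        + Complex.I * ((∫ x, (f : G →ᵇ ℂ) x ∂(μ 2)) - ∫ x, (f : G →ᵇ ℂ) x ∂(μ 3))

/-- The convolution `f ∗ g (s) = ∫ f(st) g(t⁻¹) dμ(t)` of two functions. -/
def convFun (μ : Measure G) (f g : G → ℂ) : G → ℂ :=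
  fun s => ∫ t, f (s * t) * g t⁻¹ ∂μ

/-- Membership in the centre of the convolution algebra `L¹(G,μ)`. -/
def InCenterL1 (μ : Measure G) (h : G → ℂ) : Prop :=
  Integrable h μ ∧
    ∀ g : G → ℂ, Integrable g μ → convFun μ h g =ᵐ[μ] convFun μ g h

end MeasureStuff

/-!
Write `m ∗ n - m₀ ∗ n₀ = (m - m₀) ∗ n + m₀ ∗ (n - n₀)`. For `n` in a norm-bounded set and `f` in an
equi-LUC set `F`, the functions `r_n f` again form an equi-LUC set, so the first term is UEB-small.
For the second, `m₀` is a Radon measure, hence tight: up to a small error it only sees the values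
of `r_{n - n₀} f` on a compact set `K`, and there these are values of `n - n₀` on the set `ℓ_K F`,
which is equi-LUC because conjugation by elements of `K` is uniformly continuous at the identity.
-/

lemma mul_div_add_one_lt {a ε : ℝ} (ha : 0 ≤ a) (hε : 0 < ε) : a * (ε / (a + 1)) < ε := by
  rw [mul_div_assoc', div_lt_iff₀ (by positivity)]
  nlinarith

section UEBContinuity

open Set

variable {G : Type*} [Group G] [TopologicalSpace G] [IsTopologicalGroup G]

theorem tendsto_UEBTop_iff {ι : Type*} {l : Filter ι} {φ : ι → LUCDual G} {m : LUCDual G} :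
    Tendsto φ l (@nhds _ (UEBTop G) m) ↔ UEBTendsto G l φ m := by
  rw [UEBTop, nhds_iInf, tendsto_iInf, Subtype.forall]
  refine forall₂_congr fun F _ => ?_
  rw [nhds_induced, tendsto_comap_iff, UniformFun.tendsto_iff_tendstoUniformly,
    Metric.tendstoUniformly_iff]
  refine forall₂_congr fun ε _ => eventually_congr (Eventually.of_forall fun i => ?_)
  simp [dist_eq_norm, norm_sub_rev]

lemma IsCompact.eventually_forall_conj_mem {K U : Set G} (hK : IsCompact K) (hU : U ∈ 𝓝 1) :
    ∀ᶠ v in 𝓝 (1 : G), ∀ s ∈ K, s * v * s⁻¹ ∈ U :=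
  hK.eventually_forall_of_forall_eventually fun s _ =>
    (by fun_prop : Continuous fun p : G × G => p.2 * p.1 * p.2⁻¹).continuousAt
      (by simpa using hU)

lemma EquiLUC.exists_nonneg_bound {F : Set ↥(LUC G)} (hF : EquiLUC G F) :
    ∃ C, 0 ≤ C ∧ ∀ f ∈ F, ‖f‖ ≤ C :=
  let ⟨C, hC⟩ := hF.1
  ⟨max C 0, le_max_right _ _, fun f hf => (hC f hf).trans (le_max_left _ _)⟩

lemma norm_lTrans_sub_lTrans_le {f : ↥(LUC G)} {U : Set G} {δ : ℝ} (hδ : 0 ≤ δ)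
    (hf : ∀ s t : G, s * t⁻¹ ∈ U → ‖(f : G →ᵇ ℂ) s - (f : G →ᵇ ℂ) t‖ < δ)
    {s t : G} (hst : s * t⁻¹ ∈ U) : ‖lTrans s f - lTrans t f‖ ≤ δ := by
  refine (BoundedContinuousFunction.norm_le hδ).2 fun x => (hf _ _ ?_).le
  simpa [mul_inv_rev, mul_assoc] using hst

theorem EquiLUC.image2_rAct {F : Set ↥(LUC G)} (hF : EquiLUC G F) (C : ℝ) :
    EquiLUC G (image2 rAct {n | ‖n‖ ≤ C} F) := by
  obtain ⟨CF, hCF0, hCF⟩ := hF.exists_nonneg_bound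
  refine ⟨⟨C * CF, ?_⟩, fun ε hε => ?_⟩
  · rintro _ ⟨n, hn, f, hf, rfl⟩
    exact (rAct_norm_le n f).trans
      (mul_le_mul hn (hCF f hf) (norm_nonneg f) ((norm_nonneg n).trans hn))
  · have hC : 0 ≤ max C 0 := le_max_right _ _
    obtain ⟨U, hU, hUF⟩ := hF.2 (ε / (max C 0 + 1)) (by positivity)
    refine ⟨U, hU, ?_⟩
    rintro _ ⟨n, hn, f, hf, rfl⟩ s t hst
    calc ‖(rAct n f : G →ᵇ ℂ) s - (rAct n f : G →ᵇ ℂ) t‖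
        = ‖n (lTrans s f - lTrans t f)‖ := by rw [rAct_apply, rAct_apply, map_sub]
      _ ≤ ‖n‖ * ‖lTrans s f - lTrans t f‖ := n.le_opNorm _
      _ ≤ max C 0 * (ε / (max C 0 + 1)) :=
          mul_le_mul (hn.trans (le_max_left _ _))
            (norm_lTrans_sub_lTrans_le (by positivity) (hUF f hf) hst) (norm_nonneg _) hC
      _ < ε := mul_div_add_one_lt hC hε

theorem EquiLUC.image2_lTrans {K : Set G} (hK : IsCompact K) {F : Set ↥(LUC G)}
    (hF : EquiLUC G F) : EquiLUC G (image2 lTrans K F) := by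
  obtain ⟨C, hC⟩ := hF.1
  refine ⟨⟨C, ?_⟩, fun ε hε => ?_⟩
  · rintro _ ⟨s, -, f, hf, rfl⟩
    exact (lTrans_norm_le s f).trans (hC f hf)
  · obtain ⟨U, hU, hUF⟩ := hF.2 ε hε
    refine ⟨_, hK.eventually_forall_conj_mem hU, ?_⟩
    rintro _ ⟨s, hs, f, hf, rfl⟩ x y hxy
    simpa [mul_assoc] using hUF f hf (s * x) (s * y) (by simpa [mul_assoc] using hxy s hs)

end UEBContinuity

section Tightness

variable {G : Type*} [Group G] [TopologicalSpace G] [IsTopologicalGroup G]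

def IsTightOnLUC (φ : ↥(LUC G) → ℂ) : Prop :=
  ∃ C ≥ 0, ∀ η > 0, ∃ K : Set G, IsCompact K ∧ ∀ (g : ↥(LUC G)) (ε : ℝ), 0 ≤ ε →
    (∀ x ∈ K, ‖(g : G →ᵇ ℂ) x‖ ≤ ε) → ‖φ g‖ ≤ C * ε + η * ‖g‖

lemma IsTightOnLUC.of_norm_le_add {φ ψ χ : ↥(LUC G) → ℂ} (hφ : IsTightOnLUC φ)
    (hψ : IsTightOnLUC ψ) (h : ∀ g, ‖χ g‖ ≤ ‖φ g‖ + ‖ψ g‖) : IsTightOnLUC χ := by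
  obtain ⟨C₁, hC₁, hφ⟩ := hφ
  obtain ⟨C₂, hC₂, hψ⟩ := hψ
  refine ⟨C₁ + C₂, by positivity, fun η hη => ?_⟩
  obtain ⟨K₁, hK₁, hφ⟩ := hφ (η / 2) (half_pos hη)
  obtain ⟨K₂, hK₂, hψ⟩ := hψ (η / 2) (half_pos hη)
  refine ⟨K₁ ∪ K₂, hK₁.union hK₂, fun g ε hε hg => ?_⟩
  have h₁ := hφ g ε hε fun x hx => hg x (Or.inl hx)
  have h₂ := hψ g ε hε fun x hx => hg x (Or.inr hx)
  linarith [h g]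

variable [MeasurableSpace G] [BorelSpace G]

theorem isTightOnLUC_integral (μ : Measure G) [IsFiniteMeasure μ] [μ.InnerRegular] :
    IsTightOnLUC fun g : ↥(LUC G) => ∫ x, (g : G →ᵇ ℂ) x ∂μ := by
  refine ⟨μ.real Set.univ, measureReal_nonneg, fun η hη => ?_⟩
  obtain ⟨K, -, hK, hKc, hμK⟩ := MeasurableSet.univ.exists_isCompact_isClosed_sdiff_lt
    (measure_ne_top μ _) (ENNReal.ofReal_pos.2 hη).ne'
  rw [← Set.compl_eq_univ_sdiff] at hμK
  refine ⟨K, hK, fun g ε hε hg => ?_⟩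
  have hin : ‖∫ x in K, (g : G →ᵇ ℂ) x ∂μ‖ ≤ ε * μ.real Set.univ :=
    (norm_setIntegral_le_of_norm_le_const (measure_lt_top μ K) hg).trans
      (mul_le_mul_of_nonneg_left (measureReal_mono (Set.subset_univ K)) hε)
  have hout : ‖∫ x in Kᶜ, (g : G →ᵇ ℂ) x ∂μ‖ ≤ ‖g‖ * η :=
    (norm_setIntegral_le_of_norm_le_const (measure_lt_top μ Kᶜ)
      fun x _ => (g : G →ᵇ ℂ).norm_coe_le_norm x).trans
      (mul_le_mul_of_nonneg_left (ENNReal.toReal_le_of_le_ofReal hη.le hμK.le) (norm_nonneg g))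
  dsimp only
  rw [← integral_add_compl hKc.measurableSet ((g : G →ᵇ ℂ).integrable μ)]
  linarith [norm_add_le (∫ x in K, (g : G →ᵇ ℂ) x ∂μ) (∫ x in Kᶜ, (g : G →ᵇ ℂ) x ∂μ)]

theorem IsRadonFunctional.isTightOnLUC {m : LUCDual G} (hm : IsRadonFunctional m) :
    IsTightOnLUC m := by
  obtain ⟨μ, hfin, hreg, hm⟩ := hm
  have hμ (i : Fin 4) := @isTightOnLUC_integral _ _ _ _ _ _ (μ i) (hfin i) (hreg i)
  have hsub (i j : Fin 4) := (hμ i).of_norm_le_add (hμ j) fun g => norm_sub_le _ _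
  refine (hsub 0 1).of_norm_le_add (hsub 2 3) fun g => ?_
  rw [hm g]
  refine (norm_add_le _ _).trans_eq ?_
  rw [norm_mul, Complex.norm_I, one_mul]

end Tightness

section Convolution

variable {G : Type*} [Group G] [TopologicalSpace G] [IsTopologicalGroup G]
  {ι : Type*} {l : Filter ι}

theorem IsTightOnLUC.uebTendsto_conv {m : LUCDual G} (hm : IsTightOnLUC m)
    {n : ι → LUCDual G} {n₀ : LUCDual G} (hn : UEBTendsto G l n n₀) {C : ℝ}
    (hC : ∀ᶠ i in l, ‖n i‖ ≤ C) (hn₀ : ‖n₀‖ ≤ C) :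
    UEBTendsto G l (fun i => conv m (n i)) (conv m n₀) := by
  intro F hF ε hε
  obtain ⟨CF, hCF0, hCF⟩ := hF.exists_nonneg_bound
  obtain ⟨Cm, hCm0, hm⟩ := hm
  have hC0 : 0 ≤ 2 * C * CF := by have := (norm_nonneg n₀).trans hn₀; positivity
  obtain ⟨K, hK, hmK⟩ := hm (ε / 2 / (2 * C * CF + 1)) (by positivity)
  filter_upwards [hn _ (hF.image2_lTrans hK) (ε / 2 / (Cm + 1)) (by positivity), hC]
    with i hnK hni f hf
  set g := rAct (n i) f - rAct n₀ f
  have hgK : ∀ x ∈ K, ‖(g : G →ᵇ ℂ) x‖ ≤ ε / 2 / (Cm + 1) := fun x hx =>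
    (hnK _ (Set.mem_image2_of_mem hx hf)).le
  have hg : ‖g‖ ≤ 2 * C * CF := by
    have hbound (n' : LUCDual G) (hn' : ‖n'‖ ≤ C) : ‖rAct n' f‖ ≤ C * CF :=
      (rAct_norm_le n' f).trans (mul_le_mul hn' (hCF f hf) (norm_nonneg f)
        ((norm_nonneg n').trans hn'))
    linarith [norm_sub_le (rAct (n i) f) (rAct n₀ f), hbound _ hni, hbound _ hn₀]
  calc ‖conv m (n i) f - conv m n₀ f‖ = ‖m g‖ := by rw [conv_apply, conv_apply, map_sub]
    _ ≤ Cm * (ε / 2 / (Cm + 1)) + ε / 2 / (2 * C * CF + 1) * ‖g‖ :=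
        hmK g _ (by positivity) hgK
    _ ≤ Cm * (ε / 2 / (Cm + 1)) + 2 * C * CF * (ε / 2 / (2 * C * CF + 1)) := by
        rw [mul_comm _ ‖g‖]; gcongr
    _ < ε / 2 + ε / 2 := add_lt_add_of_lt_of_le (mul_div_add_one_lt hCm0 (half_pos hε))
        (mul_div_add_one_lt hC0 (half_pos hε)).le
    _ = ε := add_halves ε

theorem UEBTendsto.conv {m n : ι → LUCDual G} {m₀ n₀ : LUCDual G}
    (hm : UEBTendsto G l m m₀) (hn : UEBTendsto G l n n₀) {C : ℝ}
    (hC : ∀ᶠ i in l, ‖n i‖ ≤ C) (hn₀ : ‖n₀‖ ≤ C) (hm₀ : IsTightOnLUC m₀) :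
    UEBTendsto G l (fun i => conv (m i) (n i)) (conv m₀ n₀) := by
  intro F hF ε hε
  filter_upwards [hm _ (hF.image2_rAct C) (ε / 2) (half_pos hε), hC,
    hm₀.uebTendsto_conv hn hC hn₀ F hF (ε / 2) (half_pos hε)] with i hmi hni hconv f hf
  calc ‖_root_.conv (m i) (n i) f - _root_.conv m₀ n₀ f‖
      ≤ ‖(m i) (rAct (n i) f) - m₀ (rAct (n i) f)‖
        + ‖_root_.conv m₀ (n i) f - _root_.conv m₀ n₀ f‖ :=
        norm_sub_le_norm_sub_add_norm_sub _ _ _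
    _ < ε / 2 + ε / 2 := add_lt_add (hmi _ (Set.mem_image2_of_mem hni hf)) (hconv f hf)
    _ = ε := add_halves ε

end Convolution

theorem conv_UEB_jointly_continuous_on_bounded_measures_general
    (G : Type*) [Group G] [TopologicalSpace G] [IsTopologicalGroup G]
    [MeasurableSpace G] [BorelSpace G]
    (B₁ B₂ : Set (LUCDual G))
    (h₁ : ∀ m ∈ B₁, IsRadonFunctional m)
    (hb₂ : ∃ C, ∀ m ∈ B₂, ‖m‖ ≤ C) :
    @ContinuousOn (LUCDual G × LUCDual G) (LUCDual G)
      (@instTopologicalSpaceProd _ _ (UEBTop G) (UEBTop G)) (UEBTop G)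
      (fun p => conv p.1 p.2) (B₁ ×ˢ B₂) := by
  let _ : TopologicalSpace (LUCDual G) := UEBTop G
  obtain ⟨C, hC⟩ := hb₂
  rintro ⟨m₀, n₀⟩ ⟨hm₀, hn₀⟩
  have hfst := tendsto_UEBTop_iff.1 (continuousWithinAt_fst (s := B₁ ×ˢ B₂) (p := (m₀, n₀)))
  have hsnd := tendsto_UEBTop_iff.1 (continuousWithinAt_snd (s := B₁ ×ˢ B₂) (p := (m₀, n₀)))
  refine tendsto_UEBTop_iff.2 (hfst.conv hsnd ?_ (hC n₀ hn₀) (h₁ m₀ hm₀).isTightOnLUC)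
  filter_upwards [self_mem_nhdsWithin] with p hp using hC p.2 hp.2

/-- **Corollary (paper Cor 5.5).** For every topological group, convolution is
jointly UEB continuous on norm-bounded subsets of `M(G)`. -/
theorem conv_UEB_jointly_continuous_on_bounded_measures
    (G : Type*) [Group G] [TopologicalSpace G] [IsTopologicalGroup G]
    [MeasurableSpace G] [BorelSpace G]
    (B₁ B₂ : Set (LUCDual G))
    (h₁ : ∀ m ∈ B₁, IsRadonFunctional m) (h₂ : ∀ m ∈ B₂, IsRadonFunctional m)
    (hb₁ : ∃ C, ∀ m ∈ B₁, ‖m‖ ≤ C) (hb₂ : ∃ C, ∀ m ∈ B₂, ‖m‖ ≤ C) :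
    @ContinuousOn (LUCDual G × LUCDual G) (LUCDual G)
      (@instTopologicalSpaceProd _ _ (UEBTop G) (UEBTop G)) (UEBTop G)
      (fun p => conv p.1 p.2) (B₁ ×ˢ B₂) :=
  conv_UEB_jointly_continuous_on_bounded_measures_general G B₁ B₂ h₁ hb₂
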